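/- arXiv:0811.1678 — 2 statements merged into one kernel-verified Lean document; each statement's English description precedes it below -/
import Mathlib

section
/- For (r,s), (r',s') ∈ ℤ², P_{r,s} = P_{r',s'} if and only if (r,s) = (r',s'), or the unordered pair {(r,s), (r',s')} equals {(2m,n), (2m+1,n₊)} for some m, n ∈ ℤ with f_n = R, or equals {(2m,n), (2m−1,n₊)} for some m, n ∈ ℤ with f_n = L. In other words, the identities P_{2m,n} = P_{2m+1,n₊} (when f_n = R) and P_{2m,n} = P_{2m−1,n₊} (when f_n = L) are the only coincidences among the elements P_{m,n}. -/
/-! Between `n` and `n₊` every factor `f k` is the other one of `R`, `L`, which fixes `C`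
(if `f n = R`) or `C·BAB⁻¹·C⁻¹ = L(C·B·C⁻¹)` (if `f n = L`); hence `F_{n₊}(C·B·C⁻¹)` is
`F_{n-1}(B)`, resp. `D·F_{n-1}(B)·D⁻¹`. This gives the listed coincidences and writes every
`P_{r,s}` as some `D^m·F_{n-1}(B)·D^{-m}`, so it remains to see that this element determines
`(m, n)`.
As `R` and `L` fix `D`, cancelling `F_{n-1}` turns a coincidence into `Ψ(B) = D^k·B·D^{-k}` with `Ψ`
a product of `n' - n` factors `R` or `L`. On reduced words, `R` is the identity on `A` and a shift
on the infinite dihedral group `⟨B, C⟩` (and `L` likewise, with `A` and `C` exchanged), so the word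
of `Ψ(B)` begins with `B`, and is longer than `B` unless `Ψ = 1`, while for `k ≠ 0` the word of
`D^k·B·D^{-k}` begins with `C` or `A`. -/

/-- The relators of the presentation ⟨A, B, C | A² = B² = C² = 1⟩. -/
def rels : Set (FreeGroup (Fin 3)) :=
  {FreeGroup.of 0 * FreeGroup.of 0, FreeGroup.of 1 * FreeGroup.of 1,
   FreeGroup.of 2 * FreeGroup.of 2}

/-- `G` is the group ⟨A, B, C | A² = B² = C² = 1⟩, the free product of three copies of ℤ/2. -/
abbrev G : Type := PresentedGroup rels

def A : G := PresentedGroup.of 0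
def B : G := PresentedGroup.of 1
def C : G := PresentedGroup.of 2

/-- The distinguished element `D = C·B·A`. -/
def D : G := C * B * A

namespace ReducedWord

def gen (v : Fin 3) : G := PresentedGroup.of v

theorem gen_mul_self (v : Fin 3) : gen v * gen v = 1 := by
  have hv : FreeGroup.of v * FreeGroup.of v ∈ rels := by
    fin_cases v <;> simp [rels]
  exact PresentedGroup.one_of_mem hv

theorem gen_inv (v : Fin 3) : (gen v)⁻¹ = gen v :=
  inv_eq_of_mul_eq_one_right (gen_mul_self v)

theorem gen_mul_self_mul (v : Fin 3) (x : G) : gen v * (gen v * x) = x := by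
  rw [← mul_assoc, gen_mul_self, one_mul]

theorem B_eq : B = gen 1 := rfl

theorem C_eq : C = gen 2 := rfl

theorem D_eq : D = gen 2 * gen 1 * gen 0 := rfl

theorem B_inv : B⁻¹ = B := gen_inv 1

theorem D_inv_eq : D⁻¹ = gen 0 * gen 1 * gen 2 := by
  simp only [D_eq, mul_inv_rev, gen_inv, mul_assoc]

abbrev Reduced (l : List (Fin 3)) : Prop := l.IsChain (· ≠ ·)

def eval (l : List (Fin 3)) : G := (l.map gen).prod

@[simp] theorem eval_nil : eval [] = 1 := rfl

@[simp] theorem eval_cons (v : Fin 3) (l : List (Fin 3)) : eval (v :: l) = gen v * eval l :=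
  List.prod_cons

def pre (v : Fin 3) : List (Fin 3) → List (Fin 3)
  | [] => [v]
  | w :: l => if v = w then l else v :: w :: l

theorem pre_cons_self (v : Fin 3) (l : List (Fin 3)) : pre v (v :: l) = l := if_pos rfl

theorem pre_of_head?_ne {v : Fin 3} {l : List (Fin 3)} (h : l.head? ≠ some v) :
    pre v l = v :: l := by
  cases l with
  | nil => rfl
  | cons w l => exact if_neg fun hvw => h (by simp [hvw])

theorem eval_pre (v : Fin 3) (l : List (Fin 3)) : eval (pre v l) = gen v * eval l := by
  cases l with
  | nil => simp [pre]
  | cons w l =>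
    by_cases hvw : v = w
    · subst hvw
      rw [pre_cons_self, eval_cons, ← mul_assoc, gen_mul_self, one_mul]
    · simp [pre, hvw]

theorem Reduced.pre {l : List (Fin 3)} (hl : Reduced l) (v : Fin 3) : Reduced (pre v l) := by
  cases l with
  | nil => exact List.isChain_singleton v
  | cons w l =>
    by_cases hvw : v = w
    · subst hvw; rw [pre_cons_self]; exact hl.tail
    · rw [pre_of_head?_ne (by simpa [eq_comm] using hvw)]; exact hl.cons_cons hvw

theorem pre_pre {l : List (Fin 3)} (hl : Reduced l) (v : Fin 3) : pre v (pre v l) = l := by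
  cases l with
  | nil => exact pre_cons_self v []
  | cons w l =>
    by_cases hvw : v = w
    · subst hvw
      rw [pre_cons_self, pre_of_head?_ne]
      rcases l with _ | ⟨u, l⟩
      · simp
      · simpa [eq_comm] using (List.isChain_cons_cons.1 hl).1
    · rw [pre_of_head?_ne (l := w :: l) (by simpa [eq_comm] using hvw), pre_cons_self]

theorem pre_pre_pre {x y z : Fin 3} (hxy : x ≠ y) (hyz : y ≠ z) {l : List (Fin 3)}
    (hl : l.head? ≠ some z) : pre x (pre y (pre z l)) = x :: y :: z :: l := by
  rw [pre_of_head?_ne hl, pre_of_head?_ne (l := z :: l) (by simpa using hyz.symm),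
    pre_of_head?_ne (l := y :: z :: l) (by simpa using hxy.symm)]

def prePerm (v : Fin 3) : Equiv.Perm {l // Reduced l} :=
  Function.Involutive.toPerm (fun l => ⟨pre v l.1, l.2.pre v⟩)
    fun l => Subtype.ext (pre_pre l.2 v)

def act : G →* Equiv.Perm {l // Reduced l} :=
  PresentedGroup.toGroup (f := prePerm) <| by
    have hsq : ∀ v, prePerm v * prePerm v = 1 := fun v =>
      Equiv.ext fun l => Subtype.ext (pre_pre l.2 v)
    rintro r (rfl | rfl | rfl) <;> simp [hsq]

def nf (g : G) : List (Fin 3) := (act g ⟨[], List.isChain_nil⟩).1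

@[simp] theorem nf_one : nf 1 = [] := rfl

theorem nf_gen_mul (v : Fin 3) (g : G) : nf (gen v * g) = pre v (nf g) := by
  rw [nf, map_mul, Equiv.Perm.mul_apply, act, gen, PresentedGroup.toGroup.of]
  rfl

theorem reduced_nf (g : G) : Reduced (nf g) := (act g _).2

theorem eval_nf (g : G) : eval (nf g) = g := by
  have hg : g ∈ Subgroup.closure (Set.range gen) := by
    rw [show Set.range gen = Set.range PresentedGroup.of from rfl,
      PresentedGroup.closure_range_of]
    trivial
  induction hg using Subgroup.closure_induction_left with
  | one => rfl
  | mul_left x hx y _ ih =>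
    obtain ⟨v, rfl⟩ := hx
    rw [nf_gen_mul, eval_pre, ih]
  | inv_mul_cancel x hx y _ ih =>
    obtain ⟨v, rfl⟩ := hx
    rw [gen_inv, nf_gen_mul, eval_pre, ih]

theorem fin3_eq_or_eq_or_eq {a b c : Fin 3} (hab : a ≠ b) (hbc : b ≠ c) (hac : a ≠ c)
    (v : Fin 3) : v = a ∨ v = b ∨ v = c := by
  revert a b c v; decide

section Shift

variable {a b c : Fin 3} (hab : a ≠ b) (hbc : b ≠ c) (hac : a ≠ c) {φ : MulAut G}
  (ha : φ (gen a) = gen a) (hb : φ (gen b) = gen b * gen c * gen b) (hc : φ (gen c) = gen b)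
include hab hbc hac ha hb hc

/-- On the infinite dihedral factor `⟨gen b, gen c⟩`, `φ` fixes the translation `gen b * gen c`
and shifts every reflection by it. So the first `⟨gen b, gen c⟩`-syllable of a reduced word keeps
a leading `b`, and loses a leading `c` only when it is `c` alone, which becomes `b`. -/
theorem nf_apply_eval_head? {l : List (Fin 3)} (hl : Reduced l) :
    (l.head? = some a → (nf (φ (eval l))).head? = some a) ∧
    (l.head? = some b → ∃ m, nf (φ (eval l)) = b :: c :: m) ∧
    (l.head? = some c →
      (nf (φ (eval l))).head? = some c ∨ ∃ m, nf (φ (eval l)) = b :: m ∧ m.head? ≠ some c) := by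
  induction l with
  | nil => simp
  | cons v l ih =>
    obtain ⟨iha, ihb, ihc⟩ := ih hl.tail
    have hv : l.head? ≠ some v := fun h => (List.isChain_cons.1 hl).1 v h rfl
    have hnil : l.head? = none → nf (φ (eval l)) = [] := by
      intro h; simp [List.head?_eq_none_iff.1 h]
    refine ⟨?_, ?_, ?_⟩ <;> rintro ⟨⟩
    · rw [eval_cons, map_mul, ha, nf_gen_mul, pre_of_head?_ne, List.head?_cons]
      rcases h : l.head? with _ | w
      · simp [hnil h]
      obtain hw | hw | hw := fin3_eq_or_eq_or_eq hab hbc hac w <;> subst hw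
      · exact absurd h hv
      · obtain ⟨m, hm⟩ := ihb h; simp [hm, hab.symm]
      · rcases ihc h with h' | ⟨m, hm, -⟩ <;> simp [*, hac.symm, hab.symm]
    · rw [eval_cons, map_mul, hb, mul_assoc, mul_assoc, nf_gen_mul, nf_gen_mul, nf_gen_mul]
      rcases h : l.head? with _ | w
      · exact ⟨_, pre_pre_pre hbc hbc.symm (by simp [hnil h])⟩
      obtain hw | hw | hw := fin3_eq_or_eq_or_eq hab hbc hac w <;> subst hw
      · exact ⟨_, pre_pre_pre hbc hbc.symm (by simp [iha h, hab])⟩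
      · exact absurd h hv
      · rcases ihc h with h' | ⟨m, hm, hmc⟩
        · exact ⟨_, pre_pre_pre hbc hbc.symm (by simp [h', hbc.symm])⟩
        · rw [hm, pre_cons_self, pre_of_head?_ne hmc, pre_of_head?_ne (by simp [hbc.symm])]
          exact ⟨_, rfl⟩
    · rw [eval_cons, map_mul, hc, nf_gen_mul]
      rcases h : l.head? with _ | w
      · simp [hnil h, pre]
      obtain hw | hw | hw := fin3_eq_or_eq_or_eq hab hbc hac w <;> subst hw
      · right
        exact ⟨_, pre_of_head?_ne (by simp [iha h, hab]), by simp [iha h, hac]⟩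
      · obtain ⟨m, hm⟩ := ihb h
        left
        simp [hm, pre_cons_self]
      · exact absurd h hv

theorem exists_nf_apply_eq_cons_cons {g : G} (hg : (nf g).head? = some b) :
    ∃ m, nf (φ g) = b :: c :: m := by
  simpa only [eval_nf] using (nf_apply_eval_head? hab hbc hac ha hb hc (reduced_nf g)).2.1 hg

end Shift

theorem nf_mul_mul_mul {x y z : Fin 3} (hxy : x ≠ y) (hyz : y ≠ z) {h : G}
    (hh : (nf h).head? ≠ some z) : nf (gen x * gen y * gen z * h) = x :: y :: z :: nf h := by
  rw [mul_assoc, mul_assoc, nf_gen_mul, nf_gen_mul, nf_gen_mul, pre_pre_pre hxy hyz hh]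

theorem head?_nf_pow_mul {x y z : Fin 3} (hxy : x ≠ y) (hyz : y ≠ z) (hxz : x ≠ z) {h : G}
    (hh : (nf h).head? ≠ some z) (j : ℕ) :
    (nf ((gen x * gen y * gen z) ^ (j + 1) * h)).head? = some x := by
  induction j with
  | zero => rw [zero_add, pow_one, nf_mul_mul_mul hxy hyz hh, List.head?_cons]
  | succ j ih =>
    rw [pow_succ', mul_assoc, nf_mul_mul_mul hxy hyz (by rw [ih]; simpa using hxz),
      List.head?_cons]

theorem head?_nf_pow_conj {x y z : Fin 3} (hxy : x ≠ y) (hyz : y ≠ z) (hxz : x ≠ z) (j : ℕ) :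
    (nf ((gen x * gen y * gen z) ^ (j + 1) * gen y * ((gen x * gen y * gen z) ^ (j + 1))⁻¹)).head? =
      some x := by
  have hinv : (gen x * gen y * gen z)⁻¹ = gen z * gen y * gen x := by
    simp only [mul_inv_rev, gen_inv, mul_assoc]
  have hz := head?_nf_pow_mul hyz.symm hxy.symm hxz.symm (h := 1) (by simp) j
  rw [mul_one] at hz
  rw [← inv_pow, hinv, mul_assoc]
  refine head?_nf_pow_mul hxy hyz hxz ?_ j
  rw [nf_gen_mul, pre_of_head?_ne (by rw [hz]; simpa using hyz.symm)]
  simpa using hyz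

theorem nf_B : nf B = [1] := nf_gen_mul 1 1

theorem eq_zero_of_head?_nf_conj {k : ℤ} (h : (nf (D ^ k * B * (D ^ k)⁻¹)).head? = some 1) :
    k = 0 := by
  obtain ⟨j, rfl | rfl⟩ := Int.eq_nat_or_neg k <;> rcases j with _ | j
  · rfl
  · rw [zpow_natCast, D_eq, B_eq, head?_nf_pow_conj (by decide) (by decide) (by decide)] at h
    exact absurd h (by decide)
  · rfl
  · rw [zpow_neg, zpow_natCast, ← inv_pow, D_inv_eq, B_eq,
      head?_nf_pow_conj (by decide) (by decide) (by decide)] at h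
    exact absurd h (by decide)

theorem B_ne_C : B ≠ C := fun h => by
  have hC : nf C = [2] := nf_gen_mul 2 1
  exact absurd (nf_B.symm.trans (h ▸ hC)) (by decide)

end ReducedWord

open ReducedWord

section Automorphisms

variable {R L : MulAut G} (hRA : R A = A) (hRB : R B = B * C * B⁻¹) (hRC : R C = B)
  (hLA : L A = B) (hLB : L B = B * A * B⁻¹) (hLC : L C = C)

include hRA hRB hRC hLA hLB hLC in
theorem exists_nf_apply_eq_one_cons_cons {φ : MulAut G} (hφ : φ = R ∨ φ = L) {g : G}
    (hg : (nf g).head? = some 1) : ∃ w m, nf (φ g) = 1 :: w :: m := by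
  rcases hφ with rfl | rfl
  · exact ⟨2, exists_nf_apply_eq_cons_cons (a := 0) (by decide) (by decide) (by decide) hRA
      (by rw [← B_eq, hRB, B_inv]; rfl) hRC hg⟩
  · exact ⟨0, exists_nf_apply_eq_cons_cons (a := 2) (by decide) (by decide) (by decide) hLC
      (by rw [← B_eq, hLB, B_inv]; rfl) hLA hg⟩

include hRA hRB hRC hLA hLB hLC in
theorem head?_nf_apply_of_mem_closure {Ψ : MulAut G} (hΨ : Ψ ∈ Submonoid.closure {R, L})
    {g : G} (hg : (nf g).head? = some 1) : (nf (Ψ g)).head? = some 1 := by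
  induction hΨ using Submonoid.closure_induction generalizing g with
  | mem φ hφ =>
    obtain ⟨w, m, h⟩ := exists_nf_apply_eq_one_cons_cons hRA hRB hRC hLA hLB hLC hφ hg
    rw [h, List.head?_cons]
  | one => exact hg
  | mul φ ψ _ _ ihφ ihψ => exact ihφ (ihψ hg)

include hRA hRB hRC in
theorem R_apply_D : R D = D := by
  rw [D, map_mul, map_mul, hRA, hRB, hRC]
  simp only [B_eq, gen_inv, mul_assoc, gen_mul_self_mul]

include hLA hLB hLC in
theorem L_apply_D : L D = D := by
  rw [D, map_mul, map_mul, hLA, hLB, hLC]; group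

include hRB hRC in
theorem R_apply_CBC : R (C * B * C⁻¹) = C := by
  rw [map_mul, map_mul, map_inv, hRB, hRC]
  simp only [B_eq, gen_inv, mul_assoc, gen_mul_self_mul, gen_mul_self, mul_one]

include hLB hLC in
theorem L_apply_CBC : L (C * B * C⁻¹) = C * (B * A * B⁻¹) * C⁻¹ := by
  rw [map_mul, map_mul, map_inv, hLC, hLB]

include hRA hRB hRC in
theorem R_apply_CBABC : R (C * (B * A * B⁻¹) * C⁻¹) = C * (B * A * B⁻¹) * C⁻¹ := by
  simp only [map_mul, map_inv, hRA, hRB, hRC]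
  simp only [B_eq, C_eq, mul_inv_rev, gen_inv, mul_assoc, gen_mul_self_mul, gen_mul_self, mul_one]

include hLA hLB hLC in
theorem L_apply_CBABC : L (C * (B * A * B⁻¹) * C⁻¹) = D * B * D⁻¹ := by
  simp only [map_mul, map_inv, hLA, hLB, hLC, D]; group

include hRC hLC in
theorem R_ne_L : R ≠ L :=
  fun h => B_ne_C (by rw [← hRC, h, hLC])

end Automorphisms

section PartialProducts

variable {f F : ℤ → MulAut G} (hF : ∀ n, F n = F (n - 1) * f n)
include hF

theorem apply_eq_of_forall_apply_eq {x : G} {a b : ℤ} (hab : a ≤ b)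
    (hx : ∀ k, a < k → k ≤ b → f k x = x) : F b x = F a x := by
  induction b, hab using Int.leInduction with
  | base => rfl
  | succ b hab ih =>
    rw [hF, add_sub_cancel_right, MulAut.mul_apply, hx _ (by omega) le_rfl,
      ih fun k hk hkb => hx k hk (by omega)]

theorem apply_eq_self_of_forall (hF0 : F 0 = 1) {x : G} (hfx : ∀ n, f n x = x) (n : ℤ) :
    F n x = x := by
  have hfix : ∀ a b : ℤ, a ≤ b → F b x = F a x := fun a b hab =>
    apply_eq_of_forall_apply_eq hF hab fun k _ _ => hfx k
  rcases le_total 0 n with hn | hn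
  · rw [hfix 0 n hn, hF0]; rfl
  · rw [← hfix n 0 hn, hF0]; rfl

theorem inv_mul_mem_closure {R L : MulAut G} (hfRL : ∀ n, f n = R ∨ f n = L) {a b : ℤ}
    (hab : a ≤ b) : (F a)⁻¹ * F b ∈ Submonoid.closure {R, L} := by
  induction b, hab using Int.leInduction with
  | base => rw [inv_mul_cancel]; exact one_mem _
  | succ b _ ih =>
    rw [hF (b + 1), add_sub_cancel_right, ← mul_assoc]
    exact mul_mem ih (Submonoid.subset_closure (hfRL (b + 1)))

end PartialProducts

section Injectivity

variable {R L : MulAut G} (hRA : R A = A) (hRB : R B = B * C * B⁻¹) (hRC : R C = B)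
  (hLA : L A = B) (hLB : L B = B * A * B⁻¹) (hLC : L C = C)
  {f F : ℤ → MulAut G} (hfRL : ∀ n, f n = R ∨ f n = L) (hF0 : F 0 = 1)
  (hF : ∀ n, F n = F (n - 1) * f n)

include hRA hRB hRC hLA hLB hLC hfRL hF0 hF

theorem F_apply_D : ∀ n, F n D = D :=
  apply_eq_self_of_forall hF hF0 fun n => (hfRL n).elim (fun h => h ▸ R_apply_D hRA hRB hRC)
    (fun h => h ▸ L_apply_D hLA hLB hLC)

theorem conj_apply_B_injective {m n m' n' : ℤ}
    (h : D ^ m * F (n - 1) B * (D ^ m)⁻¹ = D ^ m' * F (n' - 1) B * (D ^ m')⁻¹) :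
    m = m' ∧ n = n' := by
  wlog hnn : n ≤ n' generalizing m n m' n'
  · obtain ⟨h₁, h₂⟩ := this h.symm (by omega)
    exact ⟨h₁.symm, h₂.symm⟩
  set Ψ := (F (n - 1))⁻¹ * F (n' - 1)
  have hD : (F (n - 1))⁻¹ D = D := by
    conv_lhs => rw [← F_apply_D hRA hRB hRC hLA hLB hLC hfRL hF0 hF (n - 1)]
    exact MulAut.inv_apply_self G _ _
  have hΨ : Ψ B = D ^ (m - m') * B * (D ^ (m - m'))⁻¹ := by
    have h' := congrArg (fun x => (F (n - 1))⁻¹ x) h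
    simp only [map_mul, map_inv, map_zpow, hD, MulAut.inv_apply_self] at h'
    rw [MulAut.mul_apply, show (F (n - 1))⁻¹ (F (n' - 1) B) = (D ^ m')⁻¹ * (D ^ m' *
      (F (n - 1))⁻¹ (F (n' - 1) B) * (D ^ m')⁻¹) * D ^ m' by group, ← h', zpow_sub]
    group
  have hk : m - m' = 0 := eq_zero_of_head?_nf_conj <| hΨ ▸
    head?_nf_apply_of_mem_closure hRA hRB hRC hLA hLB hLC
      (inv_mul_mem_closure hF hfRL (by omega)) (by rw [nf_B]; rfl)
  refine ⟨by omega, ?_⟩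
  by_contra hne
  have hsplit : Ψ = f n * ((F n)⁻¹ * F (n' - 1)) := by
    rw [hF n, mul_inv_rev, mul_assoc, mul_inv_cancel_left]
  obtain ⟨w, l, hl⟩ := exists_nf_apply_eq_one_cons_cons hRA hRB hRC hLA hLB hLC (hfRL n) <|
    head?_nf_apply_of_mem_closure hRA hRB hRC hLA hLB hLC
      (inv_mul_mem_closure hF hfRL (by omega : n ≤ n' - 1)) (by rw [nf_B]; rfl)
  rw [← MulAut.mul_apply, ← hsplit, hΨ, hk, zpow_zero, one_mul, inv_one, mul_one, nf_B] at hl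
  exact absurd hl (by simp)

end Injectivity

section NextOccurrence

variable {R L : MulAut G} {f F : ℤ → MulAut G} {np : ℤ → ℤ}
  (hnp : ∀ n, IsLeast {k | n < k ∧ f k = f n} (np n))
include hnp

theorem ne_of_lt_np {n k : ℤ} (hnk : n < k) (hk : k < np n) : f k ≠ f n :=
  fun h => absurd ((hnp n).2 ⟨hnk, h⟩) (by omega)

theorem exists_np_eq {p : ℤ} (hp : 0 < p) (hfper : ∀ n, f (n + p) = f n) (s : ℤ) :
    ∃ n, f n = f s ∧ np n = s := by
  obtain ⟨n, ⟨hns, hfn⟩, hmax⟩ := Int.exists_greatest_of_bdd (P := fun k => k < s ∧ f k = f s)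
    ⟨s, fun k hk => hk.1.le⟩ ⟨s - p, by omega, by simpa using (hfper (s - p)).symm⟩
  obtain ⟨hnnp, hfnp⟩ := (hnp n).1
  refine ⟨n, hfn, le_antisymm ((hnp n).2 ⟨hns, hfn.symm⟩) ?_⟩
  by_contra! hlt
  exact absurd (hmax _ ⟨hlt, hfnp.trans hfn⟩) (by omega)

variable (hF : ∀ n, F n = F (n - 1) * f n)
include hF

theorem apply_np_conj_of_R (hfRL : ∀ n, f n = R ∨ f n = L) (hRB : R B = B * C * B⁻¹)
    (hRC : R C = B) (hLC : L C = C) {n : ℤ} (hn : f n = R) :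
    F (np n) (C * B * C⁻¹) = F (n - 1) B := by
  obtain ⟨hlt, hfe⟩ := (hnp n).1
  calc F (np n) (C * B * C⁻¹) = F (np n - 1) (R (C * B * C⁻¹)) := by
        rw [hF (np n), MulAut.mul_apply, hfe, hn]
    _ = F n C := by
        rw [R_apply_CBC hRB hRC]
        refine apply_eq_of_forall_apply_eq hF (by omega) fun k hk hk' => ?_
        rw [(hfRL k).resolve_left (hn ▸ ne_of_lt_np hnp hk (by omega)), hLC]
    _ = F (n - 1) B := by rw [hF n, MulAut.mul_apply, hn, hRC]

theorem apply_np_conj_of_L (hfRL : ∀ n, f n = R ∨ f n = L) (hF0 : F 0 = 1)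
    (hRA : R A = A) (hRB : R B = B * C * B⁻¹) (hRC : R C = B)
    (hLA : L A = B) (hLB : L B = B * A * B⁻¹) (hLC : L C = C) {n : ℤ} (hn : f n = L) :
    F (np n) (C * B * C⁻¹) = D * F (n - 1) B * D⁻¹ := by
  obtain ⟨hlt, hfe⟩ := (hnp n).1
  have hD := F_apply_D hRA hRB hRC hLA hLB hLC hfRL hF0 hF (n - 1)
  calc F (np n) (C * B * C⁻¹) = F (np n - 1) (L (C * B * C⁻¹)) := by
        rw [hF (np n), MulAut.mul_apply, hfe, hn]
    _ = F n (C * (B * A * B⁻¹) * C⁻¹) := by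
        rw [L_apply_CBC hLB hLC]
        refine apply_eq_of_forall_apply_eq hF (by omega) fun k hk hk' => ?_
        rw [(hfRL k).resolve_right (hn ▸ ne_of_lt_np hnp hk (by omega)),
          R_apply_CBABC hRA hRB hRC]
    _ = D * F (n - 1) B * D⁻¹ := by
        rw [hF n, MulAut.mul_apply, hn, L_apply_CBABC hLA hLB hLC, map_mul, map_mul,
          map_inv, hD]

end NextOccurrence

/-- `(r, s)` is one of the index pairs `(2m, n)`, `(2m + 1, n₊)` (when `f n = R`) and
`(2m - 1, n₊)` (when `f n = L`) that the identities of the theorem attach to `P_{2m,n}`. -/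
def Represents (R L : MulAut G) (f : ℤ → MulAut G) (np : ℤ → ℤ) (r s m n : ℤ) : Prop :=
  (r = 2 * m ∧ s = n) ∨ (f n = R ∧ r = 2 * m + 1 ∧ s = np n) ∨
    (f n = L ∧ r = 2 * m - 1 ∧ s = np n)

section Represents

variable {R L : MulAut G} {f : ℤ → MulAut G} {np : ℤ → ℤ}

theorem exists_represents (hfRL : ∀ n, f n = R ∨ f n = L)
    (hnp : ∀ n, IsLeast {k | n < k ∧ f k = f n} (np n)) {p : ℤ} (hp : 0 < p)
    (hfper : ∀ n, f (n + p) = f n) (r s : ℤ) : ∃ m n, Represents R L f np r s m n := by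
  obtain ⟨m, rfl | rfl⟩ := Int.even_or_odd' r
  · exact ⟨m, s, Or.inl ⟨rfl, rfl⟩⟩
  · obtain ⟨n, -, rfl⟩ := exists_np_eq hnp hp hfper s
    rcases hfRL n with h | h
    · exact ⟨m, n, Or.inr (Or.inl ⟨h, rfl, rfl⟩)⟩
    · exact ⟨m + 1, n, Or.inr (Or.inr ⟨h, by ring, rfl⟩)⟩

theorem exists_represents_and_represents_iff (hRL : R ≠ L) {r s r' s' : ℤ}
    (hrs : ∃ m n, Represents R L f np r s m n) :
    (∃ m n, Represents R L f np r s m n ∧ Represents R L f np r' s' m n) ↔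
      ((r = r' ∧ s = s') ∨
       (∃ m n : ℤ, f n = R ∧
         ((r = 2 * m ∧ s = n ∧ r' = 2 * m + 1 ∧ s' = np n) ∨
          (r = 2 * m + 1 ∧ s = np n ∧ r' = 2 * m ∧ s' = n))) ∨
       (∃ m n : ℤ, f n = L ∧
         ((r = 2 * m ∧ s = n ∧ r' = 2 * m - 1 ∧ s' = np n) ∨
          (r = 2 * m - 1 ∧ s = np n ∧ r' = 2 * m ∧ s' = n)))) := by
  constructor
  · rintro ⟨m, n, h, h'⟩
    unfold Represents at h h'
    grind
  · rintro (⟨rfl, rfl⟩ | ⟨m, n, hn, h⟩ | ⟨m, n, hn, h⟩)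
    · obtain ⟨m, n, h⟩ := hrs
      exact ⟨m, n, h, h⟩
    all_goals exact ⟨m, n, by unfold Represents; grind⟩

end Represents

theorem PP_eq_of_represents {R L : MulAut G} (hRA : R A = A) (hRB : R B = B * C * B⁻¹)
    (hRC : R C = B) (hLA : L A = B) (hLB : L B = B * A * B⁻¹) (hLC : L C = C)
    {f F : ℤ → MulAut G} (hfRL : ∀ n, f n = R ∨ f n = L) (hF0 : F 0 = 1)
    (hF : ∀ n, F n = F (n - 1) * f n) {np : ℤ → ℤ}
    (hnp : ∀ n, IsLeast {k | n < k ∧ f k = f n} (np n)) {PP : ℤ → ℤ → G}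
    (hPPe : ∀ m n, PP (2 * m) n = D ^ m * F (n - 1) B * (D ^ m)⁻¹)
    (hPPo : ∀ m n, PP (2 * m + 1) n = D ^ m * F n (C * B * C⁻¹) * (D ^ m)⁻¹)
    {r s m n : ℤ} (h : Represents R L f np r s m n) :
    PP r s = D ^ m * F (n - 1) B * (D ^ m)⁻¹ := by
  rcases h with ⟨rfl, rfl⟩ | ⟨hn, rfl, rfl⟩ | ⟨hn, rfl, rfl⟩
  · exact hPPe m s
  · rw [hPPo, apply_np_conj_of_R hnp hF hfRL hRB hRC hLC hn]
  · rw [show 2 * m - 1 = 2 * (m - 1) + 1 by ring, hPPo,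
      apply_np_conj_of_L hnp hF hfRL hF0 hRA hRB hRC hLA hLB hLC hn]
    group

theorem stmt17_general
    (R L : MulAut G)
    (hRA : R A = A) (hRB : R B = B * C * B⁻¹) (hRC : R C = B)
    (hLA : L A = B) (hLB : L B = B * A * B⁻¹) (hLC : L C = C)
    (p : ℤ) (hp : 2 ≤ p)
    (f : ℤ → MulAut G) (hfRL : ∀ n : ℤ, f n = R ∨ f n = L)
    (hfper : ∀ n : ℤ, f (n + p) = f n)
    (F : ℤ → MulAut G) (hF0 : F 0 = 1) (hF : ∀ n : ℤ, F n = F (n - 1) * f n)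
    (PP : ℤ → ℤ → G)
    (hPPe : ∀ m n : ℤ, PP (2 * m) n = D ^ m * F (n - 1) B * (D ^ m)⁻¹)
    (hPPo : ∀ m n : ℤ, PP (2 * m + 1) n = D ^ m * F n (C * B * C⁻¹) * (D ^ m)⁻¹)
    (np : ℤ → ℤ) (hnp : ∀ n : ℤ, IsLeast {k : ℤ | n < k ∧ f k = f n} (np n)) :
    ∀ r s r' s' : ℤ, PP r s = PP r' s' ↔
      ((r = r' ∧ s = s') ∨
       (∃ m n : ℤ, f n = R ∧
         ((r = 2 * m ∧ s = n ∧ r' = 2 * m + 1 ∧ s' = np n) ∨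
          (r = 2 * m + 1 ∧ s = np n ∧ r' = 2 * m ∧ s' = n))) ∨
       (∃ m n : ℤ, f n = L ∧
         ((r = 2 * m ∧ s = n ∧ r' = 2 * m - 1 ∧ s' = np n) ∨
          (r = 2 * m - 1 ∧ s = np n ∧ r' = 2 * m ∧ s' = n)))) := by
  have hrep : ∀ {r s m n}, Represents R L f np r s m n → PP r s = D ^ m * F (n - 1) B * (D ^ m)⁻¹ :=
    PP_eq_of_represents hRA hRB hRC hLA hLB hLC hfRL hF0 hF hnp hPPe hPPo
  have hex := exists_represents (L := L) hfRL hnp (by omega : 0 < p) hfper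
  intro r s r' s'
  rw [← exists_represents_and_represents_iff (R_ne_L hRC hLC) (hex r s)]
  constructor
  · intro h
    obtain ⟨m, n, hmn⟩ := hex r s
    obtain ⟨m', n', hmn'⟩ := hex r' s'
    rw [hrep hmn, hrep hmn'] at h
    obtain ⟨rfl, rfl⟩ := conj_apply_B_injective hRA hRB hRC hLA hLB hLC hfRL hF0 hF h
    exact ⟨m, n, hmn, hmn'⟩
  · rintro ⟨m, n, h, h'⟩
    rw [hrep h, hrep h']

/-- The identities P_{2m,n} = P_{2m+1,n₊} (f_n = R) and P_{2m,n} = P_{2m−1,n₊}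
(f_n = L) are the only coincidences among the elements P_{m,n}. -/
theorem stmt17
    (R L : MulAut G)
    (hRA : R A = A) (hRB : R B = B * C * B⁻¹) (hRC : R C = B)
    (hLA : L A = B) (hLB : L B = B * A * B⁻¹) (hLC : L C = C)
    (P : ℤ → G)
    (hP0 : ∀ m : ℤ, P (3 * m) = D ^ m * A * (D ^ m)⁻¹)
    (hP1 : ∀ m : ℤ, P (3 * m + 1) = D ^ m * B * (D ^ m)⁻¹)
    (hP2 : ∀ m : ℤ, P (3 * m + 2) = D ^ m * C * (D ^ m)⁻¹)
    (p : ℤ) (hp : 2 ≤ p)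
    (f : ℤ → MulAut G) (hfRL : ∀ n : ℤ, f n = R ∨ f n = L)
    (hfper : ∀ n : ℤ, f (n + p) = f n) (hf0 : f 0 = L) (hf1 : f 1 = R)
    (F : ℤ → MulAut G) (hF0 : F 0 = 1) (hF : ∀ n : ℤ, F n = F (n - 1) * f n)
    (Q : ℤ → ℤ → G) (hQ : ∀ m n : ℤ, Q m n = F (n - 1) (P m))
    (PP : ℤ → ℤ → G)
    (hPPe : ∀ m n : ℤ, PP (2 * m) n = D ^ m * F (n - 1) B * (D ^ m)⁻¹)
    (hPPo : ∀ m n : ℤ, PP (2 * m + 1) n = D ^ m * F n (C * B * C⁻¹) * (D ^ m)⁻¹)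
    (np : ℤ → ℤ) (hnp : ∀ n : ℤ, IsLeast {k : ℤ | n < k ∧ f k = f n} (np n)) :
    ∀ r s r' s' : ℤ, PP r s = PP r' s' ↔
      ((r = r' ∧ s = s') ∨
       (∃ m n : ℤ, f n = R ∧
         ((r = 2 * m ∧ s = n ∧ r' = 2 * m + 1 ∧ s' = np n) ∨
          (r = 2 * m + 1 ∧ s = np n ∧ r' = 2 * m ∧ s' = n))) ∨
       (∃ m n : ℤ, f n = L ∧
         ((r = 2 * m ∧ s = n ∧ r' = 2 * m - 1 ∧ s' = np n) ∨
          (r = 2 * m - 1 ∧ s = np n ∧ r' = 2 * m ∧ s' = n)))) :=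
  stmt17_general R L hRA hRB hRC hLA hLB hLC p hp f hfRL hfper F hF0 hF PP hPPe hPPo np hnp
end

section
/- The distinguished element D has infinite order in G, and for every element g ∈ G that is conjugate to one of A, B, C and every m ∈ ℤ, the equality Dᵐ·g·D⁻ᵐ = g implies m = 0. In particular, the elements P_j (j ∈ ℤ) are pairwise distinct. -/
/-!
Killing one of the three generators and sending the other two to distinct reflections gives a
homomorphism from G to the infinite dihedral group under which D becomes a nontrivial translation.
For a conjugate g of a generator, take the map killing a different generator: g becomes a
reflection, and a translation commuting with a reflection is trivial. So `D ^ m` centralizes g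
only for m = 0; the case g = A shows that D has infinite order. The same maps show that A, B, C
are pairwise non-conjugate, which together with the centralizer statement makes P injective.
-/

namespace DihedralGroup

variable {n : ℕ}

theorem exists_eq_sr_of_isConj_sr {i : ZMod n} {g : DihedralGroup n} (h : IsConj (sr i) g) :
    ∃ j, g = sr j := by
  obtain ⟨c, rfl⟩ := isConj_iff.1 h
  cases c <;> exact ⟨_, rfl⟩

theorem commute_r_sr_iff {i j : ZMod n} : Commute (r i) (sr j) ↔ i + i = 0 := by
  rw [Commute, SemiconjBy, r_mul_sr, sr_mul_r, sr.injEq, sub_eq_add_neg, add_right_inj,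
    neg_eq_iff_add_eq_zero]

end DihedralGroup

open DihedralGroup

abbrev gen (i : Fin 3) : G := PresentedGroup.of i

def liftInvolutions {H : Type*} [Group H] (f : Fin 3 → H) (hf : ∀ i, f i * f i = 1) : G →* H :=
  PresentedGroup.toGroup (f := f) (by rintro _ (rfl | rfl | rfl) <;> simp [hf])

@[simp]
theorem liftInvolutions_gen {H : Type*} [Group H] (f : Fin 3 → H) (hf : ∀ i, f i * f i = 1)
    (i : Fin 3) : liftInvolutions f hf (gen i) = f i :=
  PresentedGroup.toGroup.of (f := f) _

def dihedralRep (i : Fin 3) : G →* DihedralGroup 0 :=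
  liftInvolutions (fun j => if j = i then 1 else sr ((j : ℕ) : ZMod 0)) fun j => by
    split_ifs <;> simp

theorem dihedralRep_gen_self (i : Fin 3) : dihedralRep i (gen i) = 1 := by
  simp [dihedralRep]

theorem dihedralRep_gen_of_ne {i j : Fin 3} (h : j ≠ i) :
    dihedralRep i (gen j) = sr ((j : ℕ) : ZMod 0) := by
  simp [dihedralRep, h]

theorem exists_dihedralRep_D_eq_r (i : Fin 3) :
    ∃ k : ZMod 0, k ≠ 0 ∧ dihedralRep i D = r k := by
  fin_cases i <;> simp [D, A, B, C, dihedralRep, sub_eq_zero]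

theorem eq_of_isConj_gen {i j : Fin 3} (h : IsConj (gen i) (gen j)) : i = j := by
  by_contra hij
  have := (dihedralRep i).map_isConj h
  rw [dihedralRep_gen_self, dihedralRep_gen_of_ne (Ne.symm hij), isConj_one_right,
    one_def] at this
  cases this

theorem eq_zero_of_commute_zpow_D {i : Fin 3} {g : G} (hg : IsConj (gen i) g) {m : ℤ}
    (hm : Commute (D ^ m) g) : m = 0 := by
  obtain ⟨k, hk, hD⟩ := exists_dihedralRep_D_eq_r (i + 1)
  have hi : i ≠ i + 1 := by fin_cases i <;> decide
  obtain ⟨l, hl⟩ := exists_eq_sr_of_isConj_sr <|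
    dihedralRep_gen_of_ne hi ▸ (dihedralRep (i + 1)).map_isConj hg
  have := hm.map (dihedralRep (i + 1))
  rw [map_zpow, hD, r_zpow, hl, commute_r_sr_iff, ← two_mul, mul_eq_zero, mul_eq_zero] at this
  simpa [hk] using this

theorem not_isOfFinOrder_D : ¬ IsOfFinOrder D := by
  intro h
  obtain ⟨m, hm, hDm⟩ := isOfFinOrder_iff_zpow_eq_one.1 h
  exact hm (eq_zero_of_commute_zpow_D (IsConj.refl (gen 0)) (hDm ▸ Commute.one_left _))

theorem eq_of_zpow_D_conj_gen_eq {m m' : ℤ} {i i' : Fin 3}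
    (h : D ^ m * gen i * (D ^ m)⁻¹ = D ^ m' * gen i' * (D ^ m')⁻¹) : m = m' ∧ i = i' := by
  have hi : i = i' := eq_of_isConj_gen <|
    (isConj_iff.2 ⟨_, h⟩).trans (isConj_iff.2 ⟨_, rfl⟩).symm
  subst hi
  have hconj : D ^ (m - m') * gen i * (D ^ (m - m'))⁻¹ = gen i := by
    calc D ^ (m - m') * gen i * (D ^ (m - m'))⁻¹
        = (D ^ m')⁻¹ * (D ^ m * gen i * (D ^ m)⁻¹) * D ^ m' := by group
      _ = gen i := by rw [h]; group
  have hmm' : m - m' = 0 :=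
    eq_zero_of_commute_zpow_D (IsConj.refl _) (mul_inv_eq_iff_eq_mul.1 hconj)
  exact ⟨sub_eq_zero.1 hmm', rfl⟩

theorem exists_eq_three_mul_add_fin (j : ℤ) : ∃ (m : ℤ) (i : Fin 3), j = 3 * m + i :=
  ⟨j / 3, ⟨(j % 3).toNat, by omega⟩, by simp; omega⟩

/-- D has infinite order; no nontrivial power of D centralizes a conjugate of A, B or C;
in particular the elements P_j are pairwise distinct. -/
theorem stmt18 (P : ℤ → G)
    (hP0 : ∀ m : ℤ, P (3 * m) = D ^ m * A * (D ^ m)⁻¹)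
    (hP1 : ∀ m : ℤ, P (3 * m + 1) = D ^ m * B * (D ^ m)⁻¹)
    (hP2 : ∀ m : ℤ, P (3 * m + 2) = D ^ m * C * (D ^ m)⁻¹) :
    ¬ IsOfFinOrder D ∧
    (∀ g : G, (IsConj A g ∨ IsConj B g ∨ IsConj C g) →
      ∀ m : ℤ, D ^ m * g * (D ^ m)⁻¹ = g → m = 0) ∧
    Function.Injective P := by
  have hP : ∀ (m : ℤ) (i : Fin 3), P (3 * m + i) = D ^ m * gen i * (D ^ m)⁻¹ := by
    intro m i
    fin_cases i
    · simpa [A] using hP0 m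
    · simpa [B] using hP1 m
    · simpa [C] using hP2 m
  refine ⟨not_isOfFinOrder_D, fun g hg m hm => ?_, fun j k hjk => ?_⟩
  · obtain ⟨i, hi⟩ : ∃ i, IsConj (gen i) g := by
      rcases hg with h | h | h
      exacts [⟨0, h⟩, ⟨1, h⟩, ⟨2, h⟩]
    exact eq_zero_of_commute_zpow_D hi (mul_inv_eq_iff_eq_mul.1 hm)
  · obtain ⟨m, i, rfl⟩ := exists_eq_three_mul_add_fin j
    obtain ⟨m', i', rfl⟩ := exists_eq_three_mul_add_fin k
    rw [hP, hP] at hjk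
    obtain ⟨rfl, rfl⟩ := eq_of_zpow_D_conj_gen_eq hjk
    rfl
end
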